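/- Let d ≥ 1, let Γ ⊆ ℕ^{1+d} be an admissible graded subsemigroup, and let Φ : Γ → ℝ be superadditive and linearly bounded, i.e. there is C > 0 with |Φ(m,α)| ≤ C·m on Γ. Define the Chebyshev function G_Φ on the interior of Δ(Γ) by G_Φ(x) = sup{t ∈ ℝ : x ∈ Δ(Γ^{Φ,≥t})}. Then G_Φ takes finite values and is concave on the interior of Δ(Γ). -/

import Mathlib

open scoped BigOperators
open Filter MeasureTheory

/-- Points of `ℕ^{1+d}`, written as a degree together with a vector in `ℕ^d`. -/
abbrev NPt (d : ℕ) := ℕ × (Fin d → ℕ)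

/-- A subset of `ℕ^{1+d}` is a (graded) subsemigroup if it is closed under addition. -/
def IsGradedSubsemigroup {d : ℕ} (Γ : Set (NPt d)) : Prop :=
  ∀ x ∈ Γ, ∀ y ∈ Γ, x + y ∈ Γ

/-- Linear growth: there is `C > 0` with `|α|₁ ≤ C·m` for all `(m, α) ∈ Γ`. -/
def HasLinearGrowth {d : ℕ} (Γ : Set (NPt d)) : Prop :=
  ∃ C : ℝ, 0 < C ∧ ∀ p ∈ Γ, (∑ i, (p.2 i : ℝ)) ≤ C * p.1

/-- The canonical embedding `ℕ^{1+d} → ℤ^{1+d}`. -/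
def nptToInt {d : ℕ} (p : NPt d) : ℤ × (Fin d → ℤ) :=
  ((p.1 : ℤ), fun i => (p.2 i : ℤ))

/-- `Γ` generates `ℤ^{1+d}` as a group. -/
def GeneratesFullLattice {d : ℕ} (Γ : Set (NPt d)) : Prop :=
  AddSubgroup.closure (nptToInt '' Γ) = ⊤

/-- An admissible graded subsemigroup of `ℕ^{1+d}`. -/
def IsAdmissible {d : ℕ} (Γ : Set (NPt d)) : Prop :=
  IsGradedSubsemigroup Γ ∧ HasLinearGrowth Γ ∧ GeneratesFullLattice Γ

/-- The canonical embedding `ℕ^{1+d} → ℝ^{1+d}`. -/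
def nptToReal {d : ℕ} (p : NPt d) : ℝ × (Fin d → ℝ) :=
  ((p.1 : ℝ), fun i => (p.2 i : ℝ))

/-- The convex cone generated by a subset `S` of a real vector space: the set of finite
nonnegative linear combinations of elements of `S`. -/
def coneGen {E : Type*} [AddCommMonoid E] [Module ℝ E] (S : Set E) : Set E :=
  {y | ∃ (n : ℕ) (c : Fin n → ℝ) (p : Fin n → E),
    (∀ i, 0 ≤ c i) ∧ (∀ i, p i ∈ S) ∧ y = ∑ i, c i • p i}

/-- The Okounkov body of a subset `Σ ⊆ ℕ^{1+d}`: the slice at height `1` of the closed convex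
cone generated by `Σ` in `ℝ^{1+d}`. -/
def okounkovBody {d : ℕ} (S : Set (NPt d)) : Set (Fin d → ℝ) :=
  {x | ((1 : ℝ), x) ∈ closure (coneGen (nptToReal '' S))}

/-- The graded piece `Γ_m` of `Γ ⊆ ℕ^{1+d}`. -/
def gradedPiece {d : ℕ} (Γ : Set (NPt d)) (m : ℕ) : Set (Fin d → ℕ) :=
  {α | (m, α) ∈ Γ}

/-- The superlevel semigroup `Γ^{Φ,≥t}` of a function `Φ` on `Γ`. -/
def superlevel {d : ℕ} (Γ : Set (NPt d)) (Φ : NPt d → ℝ) (t : ℝ) : Set (NPt d) :=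
  {p ∈ Γ | p.1 * t ≤ Φ p}

/-- `θ = limsup_{n → ∞} sup_{α ∈ Γ_n} Φ(n,α)/n`. -/
noncomputable def thetaSup {d : ℕ} (Γ : Set (NPt d)) (Φ : NPt d → ℝ) : ℝ :=
  Filter.limsup (fun n : ℕ => sSup {r | ∃ α, (n, α) ∈ Γ ∧ r = Φ (n, α) / n}) Filter.atTop


/-- The Chebyshev function (concave transform) of a superadditive function `Φ` on `Γ`:
`G_Φ(x) = sup {t ∈ ℝ : x ∈ Δ(Γ^{Φ,≥t})}`. -/
noncomputable def chebyshevFn {d : ℕ} (Γ : Set (NPt d)) (Φ : NPt d → ℝ)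
    (x : Fin d → ℝ) : ℝ :=
  sSup {t : ℝ | x ∈ okounkovBody (superlevel Γ Φ t)}

/-!
Superadditivity makes the hypograph `{(p, r) : p ∈ Γ, r ≤ Φ p}` closed under addition, so it
contains all integral combinations of its points. Rounding the real coefficients of a cone
combination then shows that every point `(z, τ)` of the closed cone over the hypograph with
`v * z.1 < τ` projects into the closed cone over `Γ^{Φ,≥v}`. For `x ∈ Δ(Γ^{Φ,≥s})` and
`y ∈ Δ(Γ^{Φ,≥t})` the points `((1, x), s)` and `((1, y), t)` lie in that closed cone, hence so does
their convex combination, and therefore `a • x + b • y ∈ Δ(Γ^{Φ,≥v})` for every `v < a s + b t`.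
Finiteness: `Γ^{Φ,≥-C} = Γ`, while for `t > C` every point of `Γ^{Φ,≥t}` has degree `0`, so
`Δ(Γ^{Φ,≥t})` is empty.
-/

open Topology

section ConeGen

variable {E F : Type*} [AddCommMonoid E] [Module ℝ E] [AddCommMonoid F] [Module ℝ F]
  {S T : Set E}

lemma coneGen_mono (h : S ⊆ T) : coneGen S ⊆ coneGen T := by
  rintro y ⟨n, c, p, hc, hp, rfl⟩
  exact ⟨n, c, p, hc, fun i => h (hp i), rfl⟩

lemma smul_mem_coneGen_of_mem {c : ℝ} (hc : 0 ≤ c) {p : E} (hp : p ∈ S) : c • p ∈ coneGen S :=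
  ⟨1, fun _ => c, fun _ => p, fun _ => hc, fun _ => hp, by simp⟩

lemma smul_mem_coneGen {c : ℝ} (hc : 0 ≤ c) {y : E} (hy : y ∈ coneGen S) :
    c • y ∈ coneGen S := by
  obtain ⟨n, a, p, ha, hp, rfl⟩ := hy
  exact ⟨n, fun i => c * a i, p, fun i => mul_nonneg hc (ha i), hp, by
    simp only [Finset.smul_sum, smul_smul]⟩

lemma add_mem_coneGen {y z : E} (hy : y ∈ coneGen S) (hz : z ∈ coneGen S) :
    y + z ∈ coneGen S := by
  obtain ⟨n, a, p, ha, hp, rfl⟩ := hy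
  obtain ⟨m, b, q, hb, hq, rfl⟩ := hz
  refine ⟨n + m, Fin.append a b, Fin.append p q, Fin.addCases (by simpa) (by simpa),
    Fin.addCases (by simpa) (by simpa), ?_⟩
  simp [Fin.sum_univ_add]

lemma convex_coneGen : Convex ℝ (coneGen S) := fun _ hy _ hz _ _ ha hb _ =>
  add_mem_coneGen (smul_mem_coneGen ha hy) (smul_mem_coneGen hb hz)

lemma image_coneGen_subset (L : E →ₗ[ℝ] F) : L '' coneGen S ⊆ coneGen (L '' S) := by
  rintro _ ⟨_, ⟨n, c, p, hc, hp, rfl⟩, rfl⟩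
  exact ⟨n, c, L ∘ p, hc, fun i => ⟨p i, hp i, rfl⟩, by simp⟩

lemma coneGen_subset_setOf_nonpos (ℓ : E →ₗ[ℝ] ℝ) (h : S ⊆ {y | ℓ y ≤ 0}) :
    coneGen S ⊆ {y | ℓ y ≤ 0} := by
  rintro _ ⟨n, c, p, hc, hp, rfl⟩
  simpa using Finset.sum_nonpos fun i _ => mul_nonpos_of_nonneg_of_nonpos (hc i) (h (hp i))

end ConeGen

lemma AddSubmonoid.eq_zero_or_mem_of_mem_closure {M : Type*} [AddMonoid M] {S : Set M}
    (hS : ∀ x ∈ S, ∀ y ∈ S, x + y ∈ S) {x : M} (hx : x ∈ AddSubmonoid.closure S) :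
    x = 0 ∨ x ∈ S := by
  induction hx using AddSubmonoid.closure_induction with
  | mem x hx => exact .inr hx
  | zero => exact .inl rfl
  | add x y _ _ hx hy =>
    rcases hx with rfl | hx <;> rcases hy with rfl | hy <;> simp_all

/-- Round the coefficients `c i` of a cone combination down to `⌊c i * N⌋₊ / N`. -/
theorem exists_tendsto_inv_smul_of_mem_coneGen {M E : Type*} [AddCommMonoid M] [AddCommMonoid E]
    [Module ℝ E] [TopologicalSpace E] [ContinuousAdd E] [ContinuousSMul ℝ E]
    (T : AddSubmonoid M) (f : M →+ E) {y : E} (hy : y ∈ coneGen (f '' T)) :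
    ∃ q : ℕ → M, (∀ N, q N ∈ T) ∧ Tendsto (fun N : ℕ => (N : ℝ)⁻¹ • f (q N)) atTop (𝓝 y) := by
  obtain ⟨n, c, g, hc, hg, rfl⟩ := hy
  choose p hpT hpg using hg
  refine ⟨fun N => ∑ i, ⌊c i * N⌋₊ • p i, fun N => sum_mem fun i _ => nsmul_mem (hpT i) _, ?_⟩
  have hcoef (i : Fin n) : Tendsto (fun N : ℕ => (⌊c i * N⌋₊ : ℝ) / N) atTop (𝓝 (c i)) :=
    (tendsto_nat_floor_mul_div_atTop (hc i)).comp tendsto_natCast_atTop_atTop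
  convert tendsto_finsetSum Finset.univ fun i _ => (hcoef i).smul_const (g i) using 2 with N
  simp only [map_sum, map_nsmul, Finset.smul_sum, hpg, ← Nat.cast_smul_eq_nsmul ℝ, smul_smul,
    div_eq_inv_mul]

section Okounkov

variable {d : ℕ} {Γ : Set (NPt d)} {Φ : NPt d → ℝ}

lemma convex_okounkovBody (S : Set (NPt d)) : Convex ℝ (okounkovBody S) := by
  intro x hx y hy a b ha hb hab
  have := convex_coneGen.closure hx hy ha hb hab
  simpa [okounkovBody, hab] using this

lemma superlevel_eq_self {c : ℝ} (h : ∀ p ∈ Γ, p.1 * c ≤ Φ p) : superlevel Γ Φ c = Γ :=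
  Set.sep_eq_self_iff_mem_true.mpr h

lemma okounkovBody_superlevel_eq_empty {C t : ℝ} (hC : ∀ p ∈ Γ, Φ p ≤ C * p.1) (ht : C < t) :
    okounkovBody (superlevel Γ Φ t) = ∅ := by
  refine Set.eq_empty_of_forall_notMem fun x hx => ?_
  have hgen : nptToReal '' superlevel Γ Φ t ⊆ {z | LinearMap.fst ℝ ℝ (Fin d → ℝ) z ≤ 0} := by
    rintro _ ⟨p, ⟨hpΓ, hpt⟩, rfl⟩
    change (p.1 : ℝ) ≤ 0
    nlinarith [hC p hpΓ, (p.1.cast_nonneg : (0 : ℝ) ≤ p.1)]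
  have : ((1 : ℝ), x) ∈ {z : ℝ × (Fin d → ℝ) | z.1 ≤ 0} :=
    closure_minimal (coneGen_subset_setOf_nonpos _ hgen)
      (isClosed_le continuous_fst continuous_const) hx
  exact (one_pos.not_ge : ¬(1 : ℝ) ≤ 0) this

variable (Γ Φ) in
def hypograph : Set (NPt d × ℝ) := {h | h.1 ∈ Γ ∧ h.2 ≤ Φ h.1}

lemma add_mem_hypograph (hΓ : IsGradedSubsemigroup Γ)
    (hsuper : ∀ x ∈ Γ, ∀ y ∈ Γ, Φ x + Φ y ≤ Φ (x + y)) :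
    ∀ h ∈ hypograph Γ Φ, ∀ h' ∈ hypograph Γ Φ, h + h' ∈ hypograph Γ Φ :=
  fun _ ⟨hΓ₁, hΦ₁⟩ _ ⟨hΓ₂, hΦ₂⟩ =>
    ⟨hΓ _ hΓ₁ _ hΓ₂, (add_le_add hΦ₁ hΦ₂).trans (hsuper _ hΓ₁ _ hΓ₂)⟩

variable (d) in
def nptToRealProdHom : NPt d × ℝ →+ (ℝ × (Fin d → ℝ)) × ℝ :=
  ((Nat.castAddMonoidHom ℝ).prodMap ((Nat.castAddMonoidHom ℝ).compLeft (Fin d))).prodMap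
    (AddMonoidHom.id ℝ)

lemma nptToRealProdHom_apply (h : NPt d × ℝ) : nptToRealProdHom d h = (nptToReal h.1, h.2) :=
  rfl

variable (Γ Φ) in
def hypographCone : Set ((ℝ × (Fin d → ℝ)) × ℝ) := coneGen (nptToRealProdHom d '' hypograph Γ Φ)

lemma mem_closure_hypographCone {s : ℝ} {x : Fin d → ℝ}
    (hx : x ∈ okounkovBody (superlevel Γ Φ s)) :
    (((1 : ℝ), x), s) ∈ closure (hypographCone Γ Φ) := by
  let L := (LinearMap.id : ℝ × (Fin d → ℝ) →ₗ[ℝ] _).prod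
    ((LinearMap.fst ℝ ℝ (Fin d → ℝ)).smulRight s)
  have hgen : L '' (nptToReal '' superlevel Γ Φ s) ⊆ nptToRealProdHom d '' hypograph Γ Φ := by
    rintro _ ⟨_, ⟨p, hp, rfl⟩, rfl⟩
    exact ⟨(p, p.1 * s), hp, rfl⟩
  have hmaps : Set.MapsTo L (coneGen (nptToReal '' superlevel Γ Φ s)) (hypographCone Γ Φ) :=
    fun _ hz => coneGen_mono hgen (image_coneGen_subset L ⟨_, hz, rfl⟩)
  simpa [L] using map_mem_closure L.continuous_of_finiteDimensional hx hmaps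

lemma mem_closure_coneGen_superlevel_of_mem_hypographCone (hΓ : IsGradedSubsemigroup Γ)
    (hsuper : ∀ x ∈ Γ, ∀ y ∈ Γ, Φ x + Φ y ≤ Φ (x + y)) {v : ℝ}
    {w : (ℝ × (Fin d → ℝ)) × ℝ} (hw : w ∈ hypographCone Γ Φ) (hv : v * w.1.1 < w.2) :
    w.1 ∈ closure (coneGen (nptToReal '' superlevel Γ Φ v)) := by
  obtain ⟨q, hqT, hq⟩ := exists_tendsto_inv_smul_of_mem_coneGen
    (AddSubmonoid.closure (hypograph Γ Φ)) (nptToRealProdHom d)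
    (coneGen_mono (Set.image_mono AddSubmonoid.subset_closure) hw)
  have hU : IsOpen {w : (ℝ × (Fin d → ℝ)) × ℝ | v * w.1.1 < w.2} :=
    isOpen_lt (by fun_prop) (by fun_prop)
  refine mem_closure_of_tendsto ((continuous_fst.tendsto _).comp hq) ?_
  filter_upwards [hq.eventually (hU.mem_nhds hv)] with N hN
  rcases AddSubmonoid.eq_zero_or_mem_of_mem_closure (add_mem_hypograph hΓ hsuper) (hqT N)
    with h0 | ⟨hqΓ, hqΦ⟩
  · simp [h0] at hN
  · simp only [nptToRealProdHom_apply, Prod.smul_fst, Prod.smul_snd,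
      smul_eq_mul, mul_left_comm v] at hN
    have hlevel : (q N).1.1 * v ≤ Φ (q N).1 := by
      rw [mul_comm]; exact (lt_of_mul_lt_mul_left hN (by positivity)).le.trans hqΦ
    exact smul_mem_coneGen_of_mem (by positivity) ⟨_, ⟨hqΓ, hlevel⟩, rfl⟩

lemma mem_closure_coneGen_superlevel_of_mem_closure_hypographCone
    (hΓ : IsGradedSubsemigroup Γ) (hsuper : ∀ x ∈ Γ, ∀ y ∈ Γ, Φ x + Φ y ≤ Φ (x + y)) {v : ℝ}
    {w : (ℝ × (Fin d → ℝ)) × ℝ} (hw : w ∈ closure (hypographCone Γ Φ)) (hv : v * w.1.1 < w.2) :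
    w.1 ∈ closure (coneGen (nptToReal '' superlevel Γ Φ v)) := by
  have hU : IsOpen {w : (ℝ × (Fin d → ℝ)) × ℝ | v * w.1.1 < w.2} :=
    isOpen_lt (by fun_prop) (by fun_prop)
  refine closure_minimal (fun w' hw' => ?_) (isClosed_closure.preimage continuous_fst)
    (hU.inter_closure ⟨hv, hw⟩)
  exact mem_closure_coneGen_superlevel_of_mem_hypographCone hΓ hsuper hw'.2 hw'.1

lemma add_smul_mem_okounkovBody_superlevel (hΓ : IsGradedSubsemigroup Γ)
    (hsuper : ∀ x ∈ Γ, ∀ y ∈ Γ, Φ x + Φ y ≤ Φ (x + y)) {s t v a b : ℝ} {x y : Fin d → ℝ}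
    (hx : x ∈ okounkovBody (superlevel Γ Φ s)) (hy : y ∈ okounkovBody (superlevel Γ Φ t))
    (ha : 0 ≤ a) (hb : 0 ≤ b) (hab : a + b = 1) (hv : v < a * s + b * t) :
    a • x + b • y ∈ okounkovBody (superlevel Γ Φ v) := by
  have hcomb := convex_coneGen.closure (mem_closure_hypographCone hx)
    (mem_closure_hypographCone hy) ha hb hab
  have heq : a • (((1 : ℝ), x), s) + b • (((1 : ℝ), y), t) =
      (((1 : ℝ), a • x + b • y), a * s + b * t) := by
    simp [hab]
  rw [heq] at hcomb
  exact mem_closure_coneGen_superlevel_of_mem_closure_hypographCone hΓ hsuper hcomb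
    (by simpa using hv)

end Okounkov

theorem chebyshevFn_concaveOn_general
    (d : ℕ) (Γ : Set (NPt d)) (hΓ : IsAdmissible Γ)
    (Φ : NPt d → ℝ)
    (hsuper : ∀ x ∈ Γ, ∀ y ∈ Γ, Φ x + Φ y ≤ Φ (x + y))
    (hbdd : ∃ C : ℝ, 0 < C ∧ ∀ p ∈ Γ, |Φ p| ≤ C * p.1) :
    (∀ x ∈ interior (okounkovBody Γ),
      {t : ℝ | x ∈ okounkovBody (superlevel Γ Φ t)}.Nonempty ∧
      BddAbove {t : ℝ | x ∈ okounkovBody (superlevel Γ Φ t)}) ∧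
    ConcaveOn ℝ (interior (okounkovBody Γ)) (chebyshevFn Γ Φ) := by
  obtain ⟨hsemi, -, -⟩ := hΓ
  obtain ⟨C, -, hC⟩ := hbdd
  have hlow : superlevel Γ Φ (-C) = Γ := superlevel_eq_self fun p hp => by
    linarith [neg_abs_le (Φ p), hC p hp]
  have hne (x) (hx : x ∈ interior (okounkovBody Γ)) :
      {t : ℝ | x ∈ okounkovBody (superlevel Γ Φ t)}.Nonempty :=
    ⟨-C, by rw [Set.mem_ofPred_eq, hlow]; exact interior_subset hx⟩
  have hbddAbove (x) : BddAbove {t : ℝ | x ∈ okounkovBody (superlevel Γ Φ t)} :=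
    ⟨C, fun t ht => not_lt.mp fun hCt => by
      rwa [Set.mem_ofPred_eq, okounkovBody_superlevel_eq_empty
        (fun p hp => (le_abs_self _).trans (hC p hp)) hCt] at ht⟩
  refine ⟨fun x hx => ⟨hne x hx, hbddAbove x⟩, (convex_okounkovBody Γ).interior,
    fun x hx y hy a b ha hb hab => le_of_forall_lt_imp_le_of_dense fun v hv => ?_⟩
  obtain ⟨δ, hδ, hvδ⟩ : ∃ δ > 0, v + δ < a * chebyshevFn Γ Φ x + b * chebyshevFn Γ Φ y :=
    ⟨_, half_pos (sub_pos.mpr hv), by simp only [smul_eq_mul] at hv ⊢; linarith⟩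
  obtain ⟨s, hs, hsx⟩ := exists_lt_of_lt_csSup (hne x hx) (sub_lt_self (chebyshevFn Γ Φ x) hδ)
  obtain ⟨t, ht, hty⟩ := exists_lt_of_lt_csSup (hne y hy) (sub_lt_self (chebyshevFn Γ Φ y) hδ)
  refine le_csSup (hbddAbove _)
    (add_smul_mem_okounkovBody_superlevel hsemi hsuper hs ht ha hb hab ?_)
  nlinarith [mul_le_mul_of_nonneg_left hsx.le ha, mul_le_mul_of_nonneg_left hty.le hb]

/-- For a superadditive, linearly bounded `Φ` on an admissible graded subsemigroup `Γ`, the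
Chebyshev function `G_Φ` takes finite values (the defining set is nonempty and bounded above)
and is concave on the interior of the Okounkov body `Δ(Γ)`. -/
theorem chebyshevFn_concaveOn
    (d : ℕ) (hd : 1 ≤ d) (Γ : Set (NPt d)) (hΓ : IsAdmissible Γ)
    (Φ : NPt d → ℝ)
    (hsuper : ∀ x ∈ Γ, ∀ y ∈ Γ, Φ x + Φ y ≤ Φ (x + y))
    (hbdd : ∃ C : ℝ, 0 < C ∧ ∀ p ∈ Γ, |Φ p| ≤ C * p.1) :
    (∀ x ∈ interior (okounkovBody Γ),
      {t : ℝ | x ∈ okounkovBody (superlevel Γ Φ t)}.Nonempty ∧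
      BddAbove {t : ℝ | x ∈ okounkovBody (superlevel Γ Φ t)}) ∧
    ConcaveOn ℝ (interior (okounkovBody Γ)) (chebyshevFn Γ Φ) :=
  chebyshevFn_concaveOn_general d Γ hΓ Φ hsuper hbdd
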